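/- For all integers n ≥ 1 and k ≥ 1, the number of set partitions of [n] having exactly k−1 blocks of size greater than 1 equals f_{n+1, k}, the number of flattened partitions over [n+1] having exactly k runs. -/

import Mathlib

open Finset

/-- The word of a permutation `σ` of `Fin n`: the letter at (0-based) position `i`,
viewed as a natural number (the letters are `0, 1, ..., n-1`, identified with the usual
letters `1, ..., n`); junk value `0` outside the range. -/
def entry {n : ℕ} (σ : Equiv.Perm (Fin n)) (i : ℕ) : ℕ :=
  if h : i < n then (σ ⟨i, h⟩ : ℕ) else 0

/-- Position `i` starts a run of the word `w`: either `i = 0`, or there is a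
descent at position `i - 1`. -/
def WordRunStart (w : ℕ → ℕ) (i : ℕ) : Prop :=
  i = 0 ∨ w i < w (i - 1)

instance (w : ℕ → ℕ) (i : ℕ) : Decidable (WordRunStart w i) :=
  inferInstanceAs (Decidable (i = 0 ∨ w i < w (i - 1)))

/-- The number of runs of the length-`m` word `w` (maximal consecutive increasing subwords). -/
def wordRuns (w : ℕ → ℕ) (m : ℕ) : ℕ :=
  ((Finset.range m).filter fun i => WordRunStart w i).card

/-- The length-`m` word `w` is flattened: the first entries of its runs,
read from left to right, increase. -/
def WordFlattened (w : ℕ → ℕ) (m : ℕ) : Prop :=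
  ∀ i < m, ∀ j < m, WordRunStart w i → WordRunStart w j → i < j → w i < w j

instance (w : ℕ → ℕ) (m : ℕ) : Decidable (WordFlattened w m) :=
  inferInstanceAs (Decidable (∀ i < m, ∀ j < m,
    WordRunStart w i → WordRunStart w j → i < j → w i < w j))

/-- Position `i` (0-based) starts a run of the permutation `σ`. -/
def IsRunStart {n : ℕ} (σ : Equiv.Perm (Fin n)) (i : ℕ) : Prop :=
  i < n ∧ WordRunStart (entry σ) i

instance {n : ℕ} (σ : Equiv.Perm (Fin n)) (i : ℕ) : Decidable (IsRunStart σ i) :=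
  inferInstanceAs (Decidable (i < n ∧ WordRunStart (entry σ) i))

/-- The number of runs of the permutation `σ`. -/
def runCount {n : ℕ} (σ : Equiv.Perm (Fin n)) : ℕ :=
  wordRuns (entry σ) n

/-- `σ` is a flattened partition. -/
def IsFlattened {n : ℕ} (σ : Equiv.Perm (Fin n)) : Prop :=
  WordFlattened (entry σ) n

instance {n : ℕ} (σ : Equiv.Perm (Fin n)) : Decidable (IsFlattened σ) :=
  inferInstanceAs (Decidable (WordFlattened (entry σ) n))

/-- `flatSet n k`: the set `F_{n,k}` of flattened partitions over `[n]` with exactly `k` runs. -/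
def flatSet (n k : ℕ) : Finset (Equiv.Perm (Fin n)) :=
  Finset.univ.filter fun σ => IsFlattened σ ∧ runCount σ = k

/-- `f n k = |F_{n,k}|`, the number of flattened partitions over `[n]` with exactly `k` runs. -/
def f (n k : ℕ) : ℕ := (flatSet n k).card

/-!
Record the runs of a flattened permutation of `Fin m` by the map `g : Fin m → Fin k` sending
each letter to the index of its run. Listing the letters by run index, increasingly inside a
run, recovers the permutation (`Tuple.sort g`), so flattened permutations with `k` runs
correspond to the maps described by `IsRunLabelling`.

For `m = n + 1`, drop the letter `0` and shift the others down by one. For `i < k - 1` let `ℓ`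
be the first letter of run `i + 1`: together with the letters of run `i` that exceed it, `ℓ`
forms a block, and every other letter is a singleton. The block is big because the last letter
of run `i` exceeds `ℓ`, and the minima of the big blocks are the first letters of the runs
`1, …, k - 1`, from which the run indices are recovered by counting (`runIndex`).
-/

namespace Finset

variable {α : Type*} [LinearOrder α] {s : Finset α} {x y : α}

lemma card_filter_le_mono (h : y ≤ x) : #{z ∈ s | z ≤ y} ≤ #{z ∈ s | z ≤ x} :=
  card_le_card fun z => by simpa using fun hz hzy => ⟨hz, hzy.trans h⟩

lemma card_filter_le_le_card_filter_le_iff (hy : y ∈ s) :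
    #{z ∈ s | z ≤ y} ≤ #{z ∈ s | z ≤ x} ↔ y ≤ x := by
  refine ⟨fun h => ?_, card_filter_le_mono⟩
  by_contra! hxy
  refine (card_lt_card ((ssubset_iff_of_subset fun z => ?_).mpr ⟨y, ?_, ?_⟩)).not_ge h
  · simpa using fun hz hzx => ⟨hz, hzx.trans hxy.le⟩
  · simp [hy]
  · simp [hxy]

lemma card_filter_le_le_card_filter_lt_iff (hy : y ∈ s) :
    #{z ∈ s | z ≤ y} ≤ #{z ∈ s | z < x} ↔ y < x := by
  refine ⟨fun h => ?_, fun h => card_le_card fun z => by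
    simpa using fun hz hzy => ⟨hz, hzy.trans_lt h⟩⟩
  by_contra! hxy
  refine (card_lt_card ((ssubset_iff_of_subset fun z => ?_).mpr ⟨y, ?_, ?_⟩)).not_ge h
  · simpa using fun hz hzx => ⟨hz, (hzx.trans_le hxy).le⟩
  · simp [hy]
  · simp [hxy]

lemma card_filter_lt_add_one (hy : y ∈ s) : #{z ∈ s | z < y} + 1 = #{z ∈ s | z ≤ y} := by
  have : {z ∈ s | z ≤ y} = insert y {z ∈ s | z < y} := by
    ext z
    simp only [mem_insert, mem_filter]
    constructor
    · rintro ⟨hz, hzy⟩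
      exact hzy.eq_or_lt.imp id fun h => ⟨hz, h⟩
    · rintro (rfl | ⟨hz, hzy⟩)
      exacts [⟨hy, le_rfl⟩, ⟨hz, hzy.le⟩]
  rw [this, card_insert_of_notMem (by simp)]

lemma card_filter_lt_inj (hx : x ∈ s) (hy : y ∈ s) :
    #{z ∈ s | z < x} = #{z ∈ s | z < y} ↔ x = y := by
  refine ⟨fun h => ?_, fun h => h ▸ rfl⟩
  have h' : #{z ∈ s | z ≤ x} = #{z ∈ s | z ≤ y} := by
    rw [← card_filter_lt_add_one hx, ← card_filter_lt_add_one hy, h]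
  exact le_antisymm ((card_filter_le_le_card_filter_le_iff hx).mp h'.le)
    ((card_filter_le_le_card_filter_le_iff hy).mp h'.ge)

lemma exists_mem_card_filter_le_eq {i : ℕ} (h1 : 1 ≤ i) (h2 : i ≤ #s) :
    ∃ y ∈ s, #{z ∈ s | z ≤ y} = i := by
  have hinj : Set.InjOn (fun y => #{z ∈ s | z ≤ y}) s := fun a ha b hb h =>
    le_antisymm ((card_filter_le_le_card_filter_le_iff ha).mp h.le)
      ((card_filter_le_le_card_filter_le_iff hb).mp h.ge)
  have hsub : s.image (fun y => #{z ∈ s | z ≤ y}) ⊆ Icc 1 #s := by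
    intro c hc
    obtain ⟨y, hy, rfl⟩ := mem_image.mp hc
    exact mem_Icc.mpr ⟨card_pos.mpr ⟨y, by simp [hy]⟩, card_filter_le _ _⟩
  have heq := eq_of_subset_of_card_le hsub
    (by rw [card_image_of_injOn hinj, Nat.card_Icc]; omega)
  have hi : i ∈ Icc 1 #s := mem_Icc.mpr ⟨h1, h2⟩
  rw [← heq] at hi
  simpa using hi

end Finset

lemma Finpartition.eq_of_part_eq {α : Type*} [Fintype α] [DecidableEq α]
    {P Q : Finpartition (univ : Finset α)} (h : ∀ a, P.part a = Q.part a) : P = Q := by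
  ext b
  constructor <;> intro hb
  · obtain ⟨a, ha⟩ := P.nonempty_of_mem_parts hb
    rw [← P.part_eq_of_mem hb ha, h]
    exact Q.part_mem.mpr (mem_univ a)
  · obtain ⟨a, ha⟩ := Q.nonempty_of_mem_parts hb
    rw [← Q.part_eq_of_mem hb ha, ← h]
    exact P.part_mem.mpr (mem_univ a)

namespace FlattenedPartition

variable {m k : ℕ}

def IsFiberMin (g : Fin m → Fin k) (v : Fin m) : Prop := ∀ u, g u = g v → v ≤ u

instance (g : Fin m → Fin k) : DecidablePred (IsFiberMin g) := fun v =>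
  inferInstanceAs (Decidable (∀ u, g u = g v → v ≤ u))

/-- `g v` is the index of the run containing the letter `v`: the first letters of the runs (the
least elements of the fibres) increase with the index, and the last letter of run `i - 1` exceeds
the first letter of run `i`, so that consecutive runs do not merge. -/
structure IsRunLabelling (g : Fin m → Fin k) : Prop where
  surjective : Function.Surjective g
  exists_lt_of_lt {v w : Fin m} : g v < g w → ∃ u, g u = g v ∧ u < w
  exists_gt_of_isFiberMin {v : Fin m} : 0 < (g v : ℕ) → IsFiberMin g v →
    ∃ w, (g w : ℕ) + 1 = g v ∧ v < w

section Runs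

variable (σ : Equiv.Perm (Fin m))

lemma entry_apply (p : Fin m) : entry σ p = σ p := dif_pos p.isLt

lemma eq_of_entry_eq {p q : ℕ} (hp : p < m) (hq : q < m) (h : entry σ p = entry σ q) :
    p = q := by
  rw [entry, dif_pos hp, entry, dif_pos hq, Fin.val_inj, σ.apply_eq_iff_eq] at h
  exact Fin.mk.inj h

def runsUpTo (p : ℕ) : ℕ := #{i ∈ range (p + 1) | WordRunStart (entry σ) i}

lemma runsUpTo_zero : runsUpTo σ 0 = 1 := by
  rw [runsUpTo, range_one, filter_singleton, if_pos (by exact Or.inl rfl), card_singleton]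

lemma runsUpTo_succ (p : ℕ) :
    runsUpTo σ (p + 1) = runsUpTo σ p + if WordRunStart (entry σ) (p + 1) then 1 else 0 := by
  rw [runsUpTo, range_add_one, filter_insert]
  split_ifs <;> simp [runsUpTo]

lemma runsUpTo_mono : Monotone (runsUpTo σ) := fun _ _ h =>
  card_le_card (filter_subset_filter _ (range_subset_range.mpr (by omega)))

lemma one_le_runsUpTo (p : ℕ) : 1 ≤ runsUpTo σ p :=
  runsUpTo_zero σ ▸ runsUpTo_mono σ (Nat.zero_le p)

lemma runsUpTo_succ_of_runStart {r : ℕ} (hs : WordRunStart (entry σ) (r + 1)) :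
    runsUpTo σ (r + 1) = runsUpTo σ r + 1 := by
  rw [runsUpTo_succ, if_pos hs]

lemma entry_succ_lt_of_runStart {r : ℕ} (hs : WordRunStart (entry σ) (r + 1)) :
    entry σ (r + 1) < entry σ r :=
  hs.resolve_left (Nat.succ_ne_zero r)

lemma runsUpTo_lt_of_runStart {r s : ℕ} (hrs : r < s) (hs : WordRunStart (entry σ) s) :
    runsUpTo σ r < runsUpTo σ s := by
  obtain ⟨s, rfl⟩ := Nat.exists_eq_add_one_of_ne_zero (show s ≠ 0 by omega)
  rw [runsUpTo_succ_of_runStart σ hs]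
  exact Nat.lt_succ_of_le (runsUpTo_mono σ (by omega))

lemma runsUpTo_pred_eq_runCount (hm : 0 < m) : runsUpTo σ (m - 1) = runCount σ := by
  rw [runsUpTo, runCount, wordRuns, Nat.sub_add_cancel hm]

lemma runsUpTo_le_runCount {p : ℕ} (hp : p < m) : runsUpTo σ p ≤ runCount σ :=
  runsUpTo_pred_eq_runCount σ (by omega) ▸ runsUpTo_mono σ (by omega)

lemma entry_lt_entry_of_runsUpTo_eq {p q : ℕ} (hpq : p < q) (hq : q < m)
    (h : runsUpTo σ p = runsUpTo σ q) : entry σ p < entry σ q := by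
  induction q with
  | zero => omega
  | succ q ih =>
    have hq' : ¬ WordRunStart (entry σ) (q + 1) := fun hs =>
      (runsUpTo_lt_of_runStart σ hpq hs).ne h
    have hstep : entry σ q < entry σ (q + 1) := by
      simp only [WordRunStart, not_or, not_lt, Nat.add_sub_cancel] at hq'
      exact lt_of_le_of_ne hq'.2 fun he => by
        have := eq_of_entry_eq σ (by omega) hq he
        omega
    rcases Nat.lt_or_ge p q with hpq' | hpq'
    · have hr := runsUpTo_mono σ hpq'.le
      have hr' := runsUpTo_mono σ (show q ≤ q + 1 by omega)
      exact (ih hpq' (by omega) (by omega)).trans hstep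
    · obtain rfl : p = q := by omega
      exact hstep

lemma entry_le_entry_of_runsUpTo_eq {p q : ℕ} (hpq : p ≤ q) (hq : q < m)
    (h : runsUpTo σ p = runsUpTo σ q) : entry σ p ≤ entry σ q := by
  rcases hpq.eq_or_lt with rfl | hpq
  · exact le_rfl
  · exact (entry_lt_entry_of_runsUpTo_eq σ hpq hq h).le

lemma exists_runStart_le (p : ℕ) :
    ∃ s ≤ p, WordRunStart (entry σ) s ∧ runsUpTo σ s = runsUpTo σ p := by
  induction p with
  | zero => exact ⟨0, le_rfl, Or.inl rfl, rfl⟩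
  | succ p ih =>
    by_cases hs : WordRunStart (entry σ) (p + 1)
    · exact ⟨p + 1, le_rfl, hs, rfl⟩
    · obtain ⟨s, hsp, hss, hrs⟩ := ih
      refine ⟨s, by omega, hss, ?_⟩
      rw [runsUpTo_succ, if_neg hs, hrs, Nat.add_zero]

lemma exists_runsUpTo_eq {c q : ℕ} (h1 : 1 ≤ c) (h2 : c ≤ runsUpTo σ q) :
    ∃ p ≤ q, runsUpTo σ p = c := by
  induction q with
  | zero => exact ⟨0, le_rfl, by rw [runsUpTo_zero] at h2 ⊢; omega⟩
  | succ q ih =>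
    by_cases hc : c ≤ runsUpTo σ q
    · obtain ⟨p, hp, hpc⟩ := ih hc
      exact ⟨p, by omega, hpc⟩
    · refine ⟨q + 1, le_rfl, ?_⟩
      rw [runsUpTo_succ] at h2 ⊢
      split_ifs at h2 ⊢ <;> omega

end Runs

section Sorting

open Tuple

variable {g : Fin m → Fin k}

lemma val_apply_sort_le (g : Fin m → Fin k) {p q : Fin m} (h : p ≤ q) :
    (g (sort g p) : ℕ) ≤ g (sort g q) :=
  monotone_sort g h

lemma sort_lt_sort_of_apply_eq {p q : Fin m} (hpq : p < q) (h : g (sort g p) = g (sort g q)) :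
    sort g p < sort g q :=
  (eq_sort_iff.mp rfl).2 p q hpq h

lemma sort_le_of_forall_lt {q : Fin m} (hq : ∀ r < q, g (sort g r) < g (sort g q)) {u : Fin m}
    (hu : g u = g (sort g q)) : sort g q ≤ u := by
  obtain ⟨r, rfl⟩ := (sort g).surjective u
  rcases lt_trichotomy r q with hrq | rfl | hqr
  · exact absurd hu (hq r hrq).ne
  · exact le_rfl
  · exact (sort_lt_sort_of_apply_eq hqr hu.symm).le

lemma le_sort_of_forall_lt {p : Fin m} (hp : ∀ r, p < r → g (sort g p) < g (sort g r))
    {u : Fin m} (hu : g u = g (sort g p)) : u ≤ sort g p := by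
  obtain ⟨r, rfl⟩ := (sort g).surjective u
  rcases lt_trichotomy r p with hrp | rfl | hpr
  · exact (sort_lt_sort_of_apply_eq hrp hu).le
  · exact le_rfl
  · exact absurd hu (hp r hpr).ne'

lemma val_apply_sort_zero (hg : IsRunLabelling g) (hm : 0 < m) :
    (g (sort g ⟨0, hm⟩) : ℕ) = 0 := by
  obtain ⟨v, hv⟩ := hg.surjective ⟨0, (g ⟨0, hm⟩).pos⟩
  obtain ⟨r, rfl⟩ := (sort g).surjective v
  have := val_apply_sort_le g (show (⟨0, hm⟩ : Fin m) ≤ r from Fin.le_def.mpr (Nat.zero_le _))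
  simp only [hv] at this
  omega

lemma val_apply_sort_succ_le (hg : IsRunLabelling g) {p q : Fin m} (hpq : (p : ℕ) + 1 = q) :
    (g (sort g q) : ℕ) ≤ g (sort g p) + 1 := by
  by_contra! h
  obtain ⟨v, hv⟩ := hg.surjective ⟨g (sort g p) + 1, by omega⟩
  obtain ⟨r, rfl⟩ := (sort g).surjective v
  have hr : (g (sort g r) : ℕ) = g (sort g p) + 1 := by rw [hv]
  rcases le_or_gt r p with hrp | hpr
  · have := val_apply_sort_le g hrp
    omega
  · have := val_apply_sort_le g (show q ≤ r from Fin.le_def.mpr (by omega))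
    omega

lemma runStart_sort_iff (hg : IsRunLabelling g) {p q : Fin m} (hpq : (p : ℕ) + 1 = q) :
    WordRunStart (entry (sort g)) q ↔ (g (sort g q) : ℕ) = g (sort g p) + 1 := by
  have hpq' : p < q := Fin.lt_def.mpr (by omega)
  have hmono := val_apply_sort_le g hpq'.le
  have hle := val_apply_sort_succ_le hg hpq
  have hprev : (q : ℕ) - 1 = p := by omega
  simp only [WordRunStart, hprev, entry_apply]
  constructor
  · rintro (h0 | hdesc)
    · omega
    · by_contra hne
      have heq : g (sort g p) = g (sort g q) := Fin.ext (by omega)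
      exact (sort_lt_sort_of_apply_eq hpq' heq).not_gt hdesc
  · intro hsucc
    right
    -- `sort g q` is the least letter of its run and `sort g p` the largest of the previous one
    have hleast : IsFiberMin g (sort g q) := fun u hu =>
      sort_le_of_forall_lt (fun r hr => by
        have := val_apply_sort_le g (show r ≤ p from Fin.le_def.mpr (by omega))
        exact Fin.lt_def.mpr (by omega)) hu
    obtain ⟨w, hw, hqw⟩ := hg.exists_gt_of_isFiberMin (by omega) hleast
    have hwp : w ≤ sort g p := le_sort_of_forall_lt (fun r hr => by
        have := val_apply_sort_le g (show q ≤ r from Fin.le_def.mpr (by omega))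
        exact Fin.lt_def.mpr (by omega)) (Fin.ext (by omega))
    exact lt_of_lt_of_le hqw hwp

lemma runsUpTo_sort (hg : IsRunLabelling g) (p : Fin m) :
    runsUpTo (sort g) p = g (sort g p) + 1 := by
  obtain ⟨p, hp⟩ := p
  induction p with
  | zero => rw [val_apply_sort_zero hg hp, runsUpTo_zero]
  | succ p ih =>
    have hstep : ((⟨p, by omega⟩ : Fin m) : ℕ) + 1 = (⟨p + 1, hp⟩ : Fin m) := rfl
    have hmono := val_apply_sort_le g (show (⟨p, by omega⟩ : Fin m) ≤ ⟨p + 1, hp⟩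
      from Fin.le_def.mpr (by simp))
    have hle := val_apply_sort_succ_le hg hstep
    have hiff := runStart_sort_iff hg hstep
    rw [runsUpTo_succ, ih (by omega)]
    by_cases hs : WordRunStart (entry (sort g)) (p + 1)
    · rw [if_pos hs]
      have := hiff.mp hs
      omega
    · rw [if_neg hs]
      have := mt hiff.mpr hs
      omega

lemma runCount_sort (hg : IsRunLabelling g) : runCount (sort g) = k := by
  rcases Nat.eq_zero_or_pos m with rfl | hm
  · obtain rfl : k = 0 := by
      by_contra hk
      exact (hg.surjective ⟨0, by omega⟩).choose.elim0
    rfl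
  · have hk : 0 < k := (g ⟨0, hm⟩).pos
    obtain ⟨v, hv⟩ := hg.surjective ⟨k - 1, by omega⟩
    obtain ⟨r, rfl⟩ := (sort g).surjective v
    have := val_apply_sort_le g (show r ≤ ⟨m - 1, by omega⟩ from
      Fin.le_def.mpr (by simp; omega))
    have := (g (sort g ⟨m - 1, by omega⟩)).isLt
    simp only [hv] at *
    rw [← runsUpTo_pred_eq_runCount _ hm, runsUpTo_sort hg ⟨m - 1, by omega⟩]
    omega

lemma isFlattened_sort (hg : IsRunLabelling g) : IsFlattened (sort g) := by
  intro i hi j hj hsi hsj hij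
  have hlt := runsUpTo_lt_of_runStart (sort g) hij hsj
  rw [runsUpTo_sort hg ⟨i, hi⟩, runsUpTo_sort hg ⟨j, hj⟩] at hlt
  obtain ⟨u, hu, huq⟩ := hg.exists_lt_of_lt (Fin.lt_def.mpr (Nat.lt_of_add_lt_add_right hlt))
  have hpu : sort g ⟨i, hi⟩ ≤ u := sort_le_of_forall_lt (fun r hr => by
    have := runsUpTo_lt_of_runStart (sort g) hr hsi
    rw [runsUpTo_sort hg r, runsUpTo_sort hg ⟨i, hi⟩] at this
    exact Fin.lt_def.mpr (by omega)) hu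
  have hei : entry (sort g) i = sort g ⟨i, hi⟩ := entry_apply _ ⟨i, hi⟩
  have hej : entry (sort g) j = sort g ⟨j, hj⟩ := entry_apply _ ⟨j, hj⟩
  rw [hei, hej]
  exact lt_of_le_of_lt hpu huq

end Sorting

section PermLabelling

variable (σ : Equiv.Perm (Fin m))

def permLabelling (hσ : runCount σ = k) (v : Fin m) : Fin k :=
  ⟨runsUpTo σ (σ.symm v) - 1, by
    have := runsUpTo_le_runCount σ (σ.symm v).isLt
    have := one_le_runsUpTo σ (σ.symm v)
    omega⟩

variable {σ} (hσ : runCount σ = k)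

lemma permLabelling_apply_add_one (p : Fin m) :
    (permLabelling σ hσ (σ p) : ℕ) + 1 = runsUpTo σ p := by
  have := one_le_runsUpTo σ p
  simp only [permLabelling, Equiv.symm_apply_apply]
  omega

lemma surjective_permLabelling : Function.Surjective (permLabelling σ hσ) := by
  intro i
  have hm : 0 < m := by
    rcases Nat.eq_zero_or_pos m with rfl | hm
    · have := i.isLt
      simp only [runCount, wordRuns, range_zero, filter_empty, card_empty] at hσ
      omega
    · exact hm
  obtain ⟨p, hp, hpi⟩ := exists_runsUpTo_eq σ (c := i + 1) (q := m - 1) (by omega)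
    (by rw [runsUpTo_pred_eq_runCount σ hm, hσ]; exact i.isLt)
  refine ⟨σ ⟨p, by omega⟩, Fin.ext ?_⟩
  have := permLabelling_apply_add_one hσ ⟨p, by omega⟩
  simp only at this
  omega

lemma permLabelling_exists_lt_of_lt (hfl : IsFlattened σ) {v w : Fin m}
    (h : permLabelling σ hσ v < permLabelling σ hσ w) :
    ∃ u, permLabelling σ hσ u = permLabelling σ hσ v ∧ u < w := by
  obtain ⟨p, rfl⟩ := σ.surjective v
  obtain ⟨q, rfl⟩ := σ.surjective w
  have hp := permLabelling_apply_add_one hσ p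
  have hq := permLabelling_apply_add_one hσ q
  rw [Fin.lt_def] at h
  obtain ⟨s, hsp, hs, hsr⟩ := exists_runStart_le σ p
  obtain ⟨t, htq, ht, htr⟩ := exists_runStart_le σ q
  have hst : s < t := by
    by_contra! hts
    have := runsUpTo_mono σ hts
    omega
  have hlead : entry σ s < entry σ t := hfl s (by omega) t (by omega) hs ht hst
  have htq' : entry σ t ≤ entry σ q := entry_le_entry_of_runsUpTo_eq σ htq q.isLt htr
  have hes : entry σ s = σ ⟨s, by omega⟩ := entry_apply σ ⟨s, by omega⟩
  have heq : entry σ q = σ q := entry_apply σ q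
  refine ⟨σ ⟨s, by omega⟩, Fin.ext ?_, Fin.lt_def.mpr (by omega)⟩
  have := permLabelling_apply_add_one hσ ⟨s, by omega⟩
  simp only at this
  omega

lemma permLabelling_exists_gt_of_isFiberMin {v : Fin m} (hv : 0 < (permLabelling σ hσ v : ℕ))
    (hleast : IsFiberMin (permLabelling σ hσ) v) :
    ∃ w, (permLabelling σ hσ w : ℕ) + 1 = permLabelling σ hσ v ∧ v < w := by
  obtain ⟨p, rfl⟩ := σ.surjective v
  have hp := permLabelling_apply_add_one hσ p
  have hep : entry σ p = σ p := entry_apply σ p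
  have hs : WordRunStart (entry σ) p := by
    obtain ⟨s, hsp, hs, hsr⟩ := exists_runStart_le σ p
    obtain rfl | hsp := hsp.eq_or_lt
    · exact hs
    have hs' := permLabelling_apply_add_one hσ ⟨s, by omega⟩
    have hle := Fin.le_def.mp (hleast (σ ⟨s, by omega⟩) (Fin.ext (by simp only at hs'; omega)))
    have hlt := entry_lt_entry_of_runsUpTo_eq σ hsp p.isLt hsr
    have hes : entry σ s = σ ⟨s, by omega⟩ := entry_apply σ ⟨s, by omega⟩
    omega
  obtain ⟨r, hr⟩ := Nat.exists_eq_add_one_of_ne_zero (show (p : ℕ) ≠ 0 by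
    intro h0
    rw [h0, runsUpTo_zero] at hp
    omega)
  rw [hr] at hs hp hep
  have hrun := runsUpTo_succ_of_runStart σ hs
  have hdesc := entry_succ_lt_of_runStart σ hs
  have her : entry σ r = σ ⟨r, by omega⟩ := entry_apply σ ⟨r, by omega⟩
  refine ⟨σ ⟨r, by omega⟩, ?_, Fin.lt_def.mpr (by omega)⟩
  have := permLabelling_apply_add_one hσ ⟨r, by omega⟩
  simp only at this
  omega

lemma isRunLabelling_permLabelling (hfl : IsFlattened σ) : IsRunLabelling (permLabelling σ hσ) :=
  ⟨surjective_permLabelling hσ, permLabelling_exists_lt_of_lt hσ hfl,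
    permLabelling_exists_gt_of_isFiberMin hσ⟩

lemma sort_permLabelling : Tuple.sort (permLabelling σ hσ) = σ := by
  refine (Tuple.eq_sort_iff.mpr ⟨fun p q hpq => ?_, fun p q hpq h => ?_⟩).symm
  · have := runsUpTo_mono σ (Fin.le_def.mp hpq)
    have := permLabelling_apply_add_one hσ p
    have := permLabelling_apply_add_one hσ q
    exact Fin.le_def.mpr (by simp only [Function.comp_apply]; omega)
  · have hp := permLabelling_apply_add_one hσ p
    have hq := permLabelling_apply_add_one hσ q
    have hlt := entry_lt_entry_of_runsUpTo_eq σ hpq q.isLt (by rw [← hp, ← hq, h])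
    rwa [entry_apply, entry_apply] at hlt

lemma permLabelling_sort {g : Fin m → Fin k} (hg : IsRunLabelling g) :
    permLabelling (Tuple.sort g) (runCount_sort hg) = g := by
  funext v
  obtain ⟨p, rfl⟩ := (Tuple.sort g).surjective v
  have := permLabelling_apply_add_one (runCount_sort hg) p
  rw [runsUpTo_sort hg] at this
  exact Fin.ext (by omega)

end PermLabelling

lemma mem_flatSet {σ : Equiv.Perm (Fin m)} :
    σ ∈ flatSet m k ↔ IsFlattened σ ∧ runCount σ = k := by
  simp [flatSet]

def flatSetEquivRunLabelling : flatSet m k ≃ {g : Fin m → Fin k // IsRunLabelling g} where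
  toFun σ := ⟨permLabelling σ.1 (mem_flatSet.mp σ.2).2,
    isRunLabelling_permLabelling _ (mem_flatSet.mp σ.2).1⟩
  invFun g := ⟨Tuple.sort g.1, mem_flatSet.mpr ⟨isFlattened_sort g.2, runCount_sort g.2⟩⟩
  left_inv σ := Subtype.ext (sort_permLabelling (mem_flatSet.mp σ.2).2)
  right_inv g := Subtype.ext (permLabelling_sort g.2)

section PartitionToLabelling

variable {n : ℕ} (P : Finpartition (univ : Finset (Fin n)))

def blockMin (w : Fin n) : Fin n := (P.part w).min' (P.part_nonempty.mpr (mem_univ w))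

def bigMins : Finset (Fin n) := {w | 1 < #(P.part w) ∧ blockMin P w = w}

variable {P}

lemma self_mem_part (w : Fin n) : w ∈ P.part w := P.mem_part (mem_univ w)

lemma part_eq_of_mem_part {w x : Fin n} (hx : x ∈ P.part w) : P.part x = P.part w :=
  P.part_eq_of_mem (P.part_mem.mpr (mem_univ w)) hx

lemma blockMin_mem (w : Fin n) : blockMin P w ∈ P.part w := min'_mem _ _

lemma blockMin_le {w x : Fin n} (hx : x ∈ P.part w) : blockMin P w ≤ x := min'_le _ _ hx

lemma blockMin_eq_of_mem_part {w x : Fin n} (hx : x ∈ P.part w) :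
    blockMin P x = blockMin P w := by
  simp only [blockMin, part_eq_of_mem_part hx]

lemma mem_bigMins {w : Fin n} : w ∈ bigMins P ↔ 1 < #(P.part w) ∧ blockMin P w = w := by
  simp [bigMins]

lemma part_blockMin (w : Fin n) : P.part (blockMin P w) = P.part w :=
  part_eq_of_mem_part (blockMin_mem w)

lemma blockMin_blockMin (w : Fin n) : blockMin P (blockMin P w) = blockMin P w :=
  blockMin_eq_of_mem_part (blockMin_mem w)

lemma blockMin_eq_blockMin_iff {a b : Fin n} :
    blockMin P a = blockMin P b ↔ P.part a = P.part b := by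
  refine ⟨fun h => ?_, fun h => by simp only [blockMin, h]⟩
  rw [← part_blockMin a, h, part_blockMin b]

lemma one_lt_card_part_of_blockMin_ne {w : Fin n} (h : blockMin P w ≠ w) : 1 < #(P.part w) :=
  one_lt_card.mpr ⟨_, blockMin_mem w, w, self_mem_part w, h⟩

lemma blockMin_mem_bigMins {w : Fin n} (h : 1 < #(P.part w)) : blockMin P w ∈ bigMins P :=
  mem_bigMins.mpr ⟨(part_blockMin w).symm ▸ h, blockMin_blockMin w⟩

lemma card_bigMins : #(bigMins P) = #{b ∈ P.parts | 1 < #b} := by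
  refine card_nbij P.part (fun w hw => ?_) (fun w hw x hx h => ?_) (fun b hb => ?_)
  · rw [mem_coe, mem_bigMins] at hw
    simpa using hw.1
  · rw [mem_coe, mem_bigMins] at hw hx
    rw [← hw.2, ← hx.2]
    simp only [blockMin, h]
  · rw [coe_filter] at hb
    obtain ⟨w, hw⟩ := P.nonempty_of_mem_parts hb.1
    have hpart : P.part w = b := P.part_eq_of_mem hb.1 hw
    refine ⟨blockMin P w, blockMin_mem_bigMins (hpart ▸ hb.2), by rw [part_blockMin, hpart]⟩

variable (P) in
def runIndex : Fin (n + 1) → ℕ :=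
  Fin.cases 0 fun w => if blockMin P w = w then #{y ∈ bigMins P | y ≤ w}
    else #{y ∈ bigMins P | y < blockMin P w}

@[simp]
lemma runIndex_zero : runIndex P 0 = 0 := rfl

lemma runIndex_succ_of_eq {w : Fin n} (h : blockMin P w = w) :
    runIndex P w.succ = #{y ∈ bigMins P | y ≤ w} := by
  simp [runIndex, h]

lemma runIndex_succ_of_ne {w : Fin n} (h : blockMin P w ≠ w) :
    runIndex P w.succ = #{y ∈ bigMins P | y < blockMin P w} := by
  simp [runIndex, h]

lemma runIndex_le_card (v : Fin (n + 1)) : runIndex P v ≤ #(bigMins P) := by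
  induction v using Fin.cases with
  | zero => simp
  | succ w =>
    by_cases h : blockMin P w = w
    · rw [runIndex_succ_of_eq h]
      exact card_filter_le _ _
    · rw [runIndex_succ_of_ne h]
      exact card_filter_le _ _

lemma runIndex_succ_of_mem_bigMins {y : Fin n} (hy : y ∈ bigMins P) :
    runIndex P y.succ = #{z ∈ bigMins P | z ≤ y} :=
  runIndex_succ_of_eq (mem_bigMins.mp hy).2

lemma runIndex_succ_le (x : Fin n) : runIndex P x.succ ≤ #{z ∈ bigMins P | z ≤ x} := by
  by_cases hx : blockMin P x = x
  · rw [runIndex_succ_of_eq hx]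
  · rw [runIndex_succ_of_ne hx]
    exact card_le_card fun z => by
      simpa using fun hz hzx => ⟨hz, (hzx.trans_le (blockMin_le (self_mem_part x))).le⟩

lemma le_of_card_filter_le_le_runIndex {x y : Fin n} (hy : y ∈ bigMins P)
    (h : #{z ∈ bigMins P | z ≤ y} ≤ runIndex P x.succ) : y ≤ x := by
  by_cases hx : blockMin P x = x
  · rw [runIndex_succ_of_eq hx] at h
    exact (card_filter_le_le_card_filter_le_iff hy).mp h
  · rw [runIndex_succ_of_ne hx] at h
    exact ((card_filter_le_le_card_filter_lt_iff hy).mp h).le.trans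
      (blockMin_le (self_mem_part x))

lemma lt_of_card_filter_le_lt_runIndex {x y : Fin n} (hy : y ∈ bigMins P)
    (h : #{z ∈ bigMins P | z ≤ y} < runIndex P x.succ) : y < x := by
  refine lt_of_le_of_ne (le_of_card_filter_le_le_runIndex hy h.le) ?_
  rintro rfl
  exact h.not_ge (runIndex_succ_le y)

lemma exists_gt_runIndex_add_one {y : Fin n} (hy : y ∈ bigMins P) :
    ∃ x, y < x ∧ runIndex P x.succ + 1 = #{z ∈ bigMins P | z ≤ y} := by
  obtain ⟨hbig, hmin⟩ := mem_bigMins.mp hy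
  obtain ⟨x, hx, hxy⟩ := exists_mem_ne hbig y
  have hxmin : blockMin P x = y := (blockMin_eq_of_mem_part hx).trans hmin
  refine ⟨x, lt_of_le_of_ne (hmin ▸ blockMin_le hx) (Ne.symm hxy), ?_⟩
  rw [runIndex_succ_of_ne (hxmin.trans_ne (Ne.symm hxy)), hxmin, card_filter_lt_add_one hy]

variable (P) in
def partitionLabelling (hk : #(bigMins P) + 1 = k) (v : Fin (n + 1)) : Fin k :=
  ⟨runIndex P v, by have := runIndex_le_card (P := P) v; omega⟩

lemma isRunLabelling_partitionLabelling (hk : #(bigMins P) + 1 = k) :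
    IsRunLabelling (partitionLabelling P hk) := by
  have exists_leader {i : ℕ} (h1 : 1 ≤ i) (h2 : i < k) :
      ∃ y ∈ bigMins P, #{z ∈ bigMins P | z ≤ y} = i ∧ runIndex P y.succ = i := by
    obtain ⟨y, hy, hyi⟩ := exists_mem_card_filter_le_eq (s := bigMins P) h1 (by omega)
    exact ⟨y, hy, hyi, (runIndex_succ_of_mem_bigMins hy).trans hyi⟩
  refine ⟨fun i => ?_, fun {v w} h => ?_, fun {v} hv hmin => ?_⟩
  · rcases Nat.eq_zero_or_pos i with hi | hi
    · exact ⟨0, Fin.ext hi.symm⟩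
    · obtain ⟨y, -, -, hyi⟩ := exists_leader hi i.isLt
      exact ⟨y.succ, Fin.ext hyi⟩
  · change runIndex P v < runIndex P w at h
    obtain ⟨x, rfl⟩ := Fin.exists_succ_eq.mpr (show w ≠ 0 by rintro rfl; simp at h)
    rcases Nat.eq_zero_or_pos (runIndex P v) with hi | hi
    · exact ⟨0, Fin.ext (by simp [partitionLabelling, hi]), Fin.succ_pos x⟩
    · obtain ⟨y, hy, hrank, hyi⟩ := exists_leader hi (partitionLabelling P hk v).isLt
      exact ⟨y.succ, Fin.ext hyi, Fin.succ_lt_succ_iff.mpr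
        (lt_of_card_filter_le_lt_runIndex hy (by omega))⟩
  · change 0 < runIndex P v at hv
    obtain ⟨y, hy, hrank, hyi⟩ := exists_leader hv (partitionLabelling P hk v).isLt
    obtain ⟨x, hyx, hx⟩ := exists_gt_runIndex_add_one hy
    refine ⟨x.succ, by simp only [partitionLabelling]; omega, ?_⟩
    exact (hmin y.succ (Fin.ext hyi)).trans_lt (Fin.succ_lt_succ_iff.mpr hyx)

end PartitionToLabelling

section Leaders

variable {g : Fin m → Fin k}

def leader (hg : IsRunLabelling g) (i : Fin k) : Fin m :=
  ({v | g v = i} : Finset (Fin m)).min'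
    (let ⟨v, hv⟩ := hg.surjective i; ⟨v, by simpa using hv⟩)

lemma apply_leader (hg : IsRunLabelling g) (i : Fin k) : g (leader hg i) = i := by
  unfold leader
  exact (mem_filter.mp (min'_mem ({v | g v = i} : Finset (Fin m)) _)).2

lemma leader_le (hg : IsRunLabelling g) (v : Fin m) : leader hg (g v) ≤ v :=
  min'_le _ _ (by simp)

lemma isFiberMin_leader (hg : IsRunLabelling g) (i : Fin k) : IsFiberMin g (leader hg i) :=
  fun u hu => by
    rw [apply_leader hg] at hu
    exact hu ▸ leader_le hg u

lemma IsFiberMin.leader_eq (hg : IsRunLabelling g) {v : Fin m} (h : IsFiberMin g v) :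
    leader hg (g v) = v :=
  le_antisymm (leader_le hg v) (h _ (apply_leader hg _))

lemma leader_strictMono (hg : IsRunLabelling g) : StrictMono (leader hg) := fun i j hij => by
  obtain ⟨u, hu, hlt⟩ := hg.exists_lt_of_lt (v := leader hg i) (w := leader hg j)
    (by rwa [apply_leader hg, apply_leader hg])
  rw [apply_leader hg] at hu
  exact (hu ▸ leader_le hg u).trans_lt hlt

lemma card_filter_isFiberMin_le (hg : IsRunLabelling g) {x : Fin m}
    (hx : ∀ u, (g u : ℕ) = g x + 1 → x < u) :
    #{v | IsFiberMin g v ∧ v ≤ x} = g x + 1 := by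
  rw [← Fin.card_Iic (g x)]
  refine card_nbij g (fun v hv => ?_) (fun v hv v' hv' h => ?_) (fun i hi => ?_)
  · rw [mem_coe, mem_filter] at hv
    rw [coe_Iic, Set.mem_Iic]
    by_contra! hlt
    have hnext : g x + 1 < k := by have := (g v).isLt; omega
    have hle := (leader_strictMono hg).monotone
      (show (⟨g x + 1, hnext⟩ : Fin k) ≤ g v from Fin.le_def.mpr (by simpa using hlt))
    rw [hv.2.1.leader_eq hg] at hle
    have := hx _ (congrArg Fin.val (apply_leader hg ⟨g x + 1, hnext⟩))
    exact absurd hv.2.2 (by order)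
  · rw [mem_coe, mem_filter] at hv hv'
    rw [← hv.2.1.leader_eq hg, ← hv'.2.1.leader_eq hg, h]
  · rw [coe_Iic, Set.mem_Iic] at hi
    refine ⟨leader hg i, ?_, apply_leader hg i⟩
    rw [mem_coe, mem_filter]
    exact ⟨mem_univ _, isFiberMin_leader hg i,
      ((leader_strictMono hg).monotone hi).trans (leader_le hg x)⟩

end Leaders

section LabellingToPartition

variable {n : ℕ}

def blockLabel (g : Fin (n + 1) → Fin k) (w : Fin n) : ℕ ⊕ Fin n :=
  if IsFiberMin g w.succ then .inl (g w.succ - 1)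
  else if ∃ u, (g u : ℕ) = g w.succ + 1 ∧ u < w.succ then .inl (g w.succ) else .inr w

def labellingPartition (g : Fin (n + 1) → Fin k) : Finpartition (univ : Finset (Fin n)) :=
  letI : DecidableRel (Setoid.ker (blockLabel g)) := fun a b =>
    decEq (blockLabel g a) (blockLabel g b)
  .ofSetoid (Setoid.ker (blockLabel g))

variable {g : Fin (n + 1) → Fin k}

lemma mem_part_labellingPartition {a b : Fin n} :
    b ∈ (labellingPartition g).part a ↔ blockLabel g a = blockLabel g b := by
  let _ : DecidableRel (Setoid.ker (blockLabel g)) := fun a b =>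
    decEq (blockLabel g a) (blockLabel g b)
  exact Finpartition.mem_part_ofSetoid_iff_rel

lemma isFiberMin_zero : IsFiberMin g 0 := fun u _ => Fin.zero_le u

lemma val_apply_zero (hg : IsRunLabelling g) : (g 0 : ℕ) = 0 := by
  by_contra h
  obtain ⟨v, hv⟩ := hg.surjective ⟨0, (g 0).pos⟩
  obtain ⟨u, -, hu⟩ := hg.exists_lt_of_lt (v := v) (w := 0)
    (Fin.lt_def.mpr (by rw [hv]; exact Nat.pos_of_ne_zero h))
  exact Fin.not_lt_zero u hu

lemma pos_of_isFiberMin_succ (hg : IsRunLabelling g) {w : Fin n} (hw : IsFiberMin g w.succ) :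
    0 < (g w.succ : ℕ) := by
  by_contra h0
  exact Fin.succ_ne_zero w (le_antisymm (hw 0 (Fin.ext (by rw [val_apply_zero hg]; omega)))
    (Fin.zero_le _))

lemma blockLabel_of_isFiberMin {w : Fin n} (hw : IsFiberMin g w.succ) :
    blockLabel g w = .inl (g w.succ - 1) :=
  if_pos hw

lemma eq_of_blockLabel_eq_inr {w x : Fin n} (h : blockLabel g x = .inr w) : x = w := by
  unfold blockLabel at h
  split_ifs at h
  simpa using h

lemma le_of_blockLabel_eq (hg : IsRunLabelling g) {w x : Fin n} (hw : IsFiberMin g w.succ)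
    (h : blockLabel g x = blockLabel g w) : w ≤ x := by
  have hpos := pos_of_isFiberMin_succ hg hw
  rw [blockLabel_of_isFiberMin hw] at h
  unfold blockLabel at h
  split_ifs at h with hx hex
  · have := pos_of_isFiberMin_succ hg hx
    simp only [Sum.inl.injEq] at h
    exact Fin.succ_le_succ_iff.mp (hw _ (Fin.ext (by omega)))
  · obtain ⟨u, hu, hux⟩ := hex
    simp only [Sum.inl.injEq] at h
    exact Fin.succ_le_succ_iff.mp ((hw u (Fin.ext (by omega))).trans hux.le)

lemma exists_ne_blockLabel_eq (hg : IsRunLabelling g) {w : Fin n} (hw : IsFiberMin g w.succ) :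
    ∃ x ≠ w, blockLabel g x = blockLabel g w := by
  obtain ⟨u, hu, hwu⟩ := hg.exists_gt_of_isFiberMin (pos_of_isFiberMin_succ hg hw) hw
  obtain ⟨x, rfl⟩ := Fin.exists_succ_eq.mpr ((Fin.zero_le _).trans_lt hwu).ne'
  refine ⟨x, by rintro rfl; exact lt_irrefl _ hwu, ?_⟩
  have hx : ¬ IsFiberMin g x.succ := fun hx => by
    obtain ⟨u', hu', hu'w⟩ := hg.exists_lt_of_lt (v := x.succ) (w := w.succ)
      (Fin.lt_def.mpr (by omega))
    exact (hx u' hu').not_gt (hu'w.trans hwu)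
  rw [blockLabel_of_isFiberMin hw, blockLabel, if_neg hx, if_pos ⟨w.succ, by omega, hwu⟩]
  congr 1
  omega

lemma exists_isFiberMin_blockLabel_eq (hg : IsRunLabelling g) {w : Fin n}
    (hw : ¬ IsFiberMin g w.succ) (hex : ∃ u, (g u : ℕ) = g w.succ + 1 ∧ u < w.succ) :
    ∃ y < w, IsFiberMin g y.succ ∧ (g y.succ : ℕ) = g w.succ + 1 ∧
      blockLabel g y = blockLabel g w := by
  obtain ⟨u, hu, huw⟩ := hex
  have hi : (g w.succ : ℕ) + 1 < k := hu ▸ (g u).isLt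
  have hne : leader hg ⟨_, hi⟩ ≠ 0 := fun h0 => by
    have := congrArg Fin.val (apply_leader hg ⟨_, hi⟩)
    rw [h0, val_apply_zero hg] at this
    exact Nat.succ_ne_zero _ this.symm
  obtain ⟨y, hy⟩ := Fin.exists_succ_eq.mpr hne
  have hyg : (g y.succ : ℕ) = g w.succ + 1 := by rw [hy, apply_leader hg]
  have hfib : IsFiberMin g y.succ := hy ▸ isFiberMin_leader hg _
  have hyu : y.succ ≤ u := hfib u (Fin.ext (by omega))
  refine ⟨y, Fin.succ_lt_succ_iff.mp (hyu.trans_lt huw), hfib, hyg, ?_⟩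
  rw [blockLabel_of_isFiberMin hfib, blockLabel, if_neg hw, if_pos ⟨u, hu, huw⟩, hyg]
  rfl

lemma blockMin_labellingPartition_of_isFiberMin (hg : IsRunLabelling g) {w : Fin n}
    (hw : IsFiberMin g w.succ) : blockMin (labellingPartition g) w = w :=
  le_antisymm (blockMin_le (self_mem_part w))
    (le_of_blockLabel_eq hg hw (mem_part_labellingPartition.mp (blockMin_mem w)).symm)

lemma blockMin_labellingPartition_of_ne (hg : IsRunLabelling g) {w : Fin n}
    (h : blockMin (labellingPartition g) w ≠ w) :
    IsFiberMin g (blockMin (labellingPartition g) w).succ ∧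
      (g (blockMin (labellingPartition g) w).succ : ℕ) = g w.succ + 1 := by
  have hw : ¬ IsFiberMin g w.succ := fun hw => h (blockMin_labellingPartition_of_isFiberMin hg hw)
  by_cases hex : ∃ u, (g u : ℕ) = g w.succ + 1 ∧ u < w.succ
  · obtain ⟨y, -, hy, hyg, hyw⟩ := exists_isFiberMin_blockLabel_eq hg hw hex
    have hmin : blockMin (labellingPartition g) w = y := by
      rw [← blockMin_eq_of_mem_part (mem_part_labellingPartition.mpr hyw.symm)]
      exact blockMin_labellingPartition_of_isFiberMin hg hy
    rw [hmin]
    exact ⟨hy, hyg⟩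
  · have hinr : blockLabel g w = .inr w := by rw [blockLabel, if_neg hw, if_neg hex]
    exact absurd (eq_of_blockLabel_eq_inr
      ((mem_part_labellingPartition.mp (blockMin_mem w)).symm.trans hinr)) h

lemma mem_bigMins_labellingPartition (hg : IsRunLabelling g) {w : Fin n} :
    w ∈ bigMins (labellingPartition g) ↔ IsFiberMin g w.succ := by
  rw [mem_bigMins]
  constructor
  · rintro ⟨hbig, hmin⟩
    by_contra hw
    by_cases hex : ∃ u, (g u : ℕ) = g w.succ + 1 ∧ u < w.succ
    · obtain ⟨y, hyw, -, -, hlabel⟩ := exists_isFiberMin_blockLabel_eq hg hw hex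
      have := hmin ▸ blockMin_le (mem_part_labellingPartition.mpr hlabel.symm)
      exact this.not_gt hyw
    · have hinr : blockLabel g w = .inr w := by rw [blockLabel, if_neg hw, if_neg hex]
      obtain ⟨a, ha, b, hb, hab⟩ := one_lt_card.mp hbig
      rw [mem_part_labellingPartition, hinr] at ha hb
      exact hab ((eq_of_blockLabel_eq_inr ha.symm).trans (eq_of_blockLabel_eq_inr hb.symm).symm)
  · intro hw
    obtain ⟨x, hxw, hx⟩ := exists_ne_blockLabel_eq hg hw
    exact ⟨one_lt_card.mpr
        ⟨w, self_mem_part w, x, mem_part_labellingPartition.mpr hx.symm, hxw.symm⟩,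
      blockMin_labellingPartition_of_isFiberMin hg hw⟩

lemma lt_of_blockMin_labellingPartition_eq (hg : IsRunLabelling g) {w : Fin n}
    (h : blockMin (labellingPartition g) w = w) {u : Fin (n + 1)}
    (hu : (g u : ℕ) = g w.succ + 1) : w.succ < u := by
  by_cases hw : IsFiberMin g w.succ
  · rw [← hw.leader_eq hg]
    exact (leader_strictMono hg (Fin.lt_def.mpr (by omega))).trans_le (leader_le hg u)
  · refine lt_of_le_of_ne (le_of_not_gt fun huw => ?_) (by rintro rfl; omega)
    obtain ⟨y, hyw, -, -, hlabel⟩ := exists_isFiberMin_blockLabel_eq hg hw ⟨u, hu, huw⟩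
    exact (h ▸ blockMin_le (mem_part_labellingPartition.mpr hlabel.symm)).not_gt hyw

lemma card_filter_bigMins_labellingPartition_le (hg : IsRunLabelling g) {x : Fin n}
    (hx : blockMin (labellingPartition g) x = x) :
    #{y ∈ bigMins (labellingPartition g) | y ≤ x} = g x.succ := by
  have hcount := card_filter_isFiberMin_le hg fun u hu =>
    lt_of_blockMin_labellingPartition_eq hg hx hu
  rw [Fin.card_filter_univ_succ, if_pos ⟨isFiberMin_zero, Fin.zero_le _⟩] at hcount
  rw [← Nat.add_right_cancel hcount]
  congr 1
  ext y
  simp [mem_bigMins_labellingPartition hg]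

lemma runIndex_labellingPartition (hg : IsRunLabelling g) (v : Fin (n + 1)) :
    runIndex (labellingPartition g) v = g v := by
  induction v using Fin.cases with
  | zero => rw [runIndex_zero, val_apply_zero hg]
  | succ w =>
    by_cases h : blockMin (labellingPartition g) w = w
    · rw [runIndex_succ_of_eq h, card_filter_bigMins_labellingPartition_le hg h]
    · have hcard :=
        card_filter_lt_add_one (blockMin_mem_bigMins (one_lt_card_part_of_blockMin_ne h))
      rw [card_filter_bigMins_labellingPartition_le hg (blockMin_blockMin w),
        (blockMin_labellingPartition_of_ne hg h).2] at hcard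
      rw [runIndex_succ_of_ne h]
      omega

lemma card_bigMins_labellingPartition (hg : IsRunLabelling g) :
    #(bigMins (labellingPartition g)) + 1 = k := by
  have hk : 0 < k := (g 0).pos
  have hge : k - 1 ≤ #(bigMins (labellingPartition g)) := by
    obtain ⟨v, hv⟩ := hg.surjective ⟨k - 1, by omega⟩
    have := runIndex_le_card (P := labellingPartition g) v
    rw [runIndex_labellingPartition hg, hv] at this
    exact this
  have hle : #(bigMins (labellingPartition g)) < k := by
    rcases Nat.eq_zero_or_pos #(bigMins (labellingPartition g)) with h0 | hpos
    · omega
    · obtain ⟨y, hy, hyc⟩ := exists_mem_card_filter_le_eq hpos le_rfl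
      rw [← hyc, ← runIndex_succ_of_mem_bigMins hy, runIndex_labellingPartition hg]
      exact (g y.succ).isLt
  omega

end LabellingToPartition

section RoundTrip

variable {n : ℕ} {P : Finpartition (univ : Finset (Fin n))}

variable (hk : #(bigMins P) + 1 = k)

lemma isFiberMin_partitionLabelling_succ_iff {x : Fin n} :
    IsFiberMin (partitionLabelling P hk) x.succ ↔ x ∈ bigMins P := by
  constructor
  · intro hx
    by_contra hxM
    rcases Nat.eq_zero_or_pos (runIndex P x.succ) with h0 | hpos
    · exact Fin.succ_ne_zero x (le_antisymm (hx 0 (Fin.ext (by simp [partitionLabelling, h0])))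
        (Fin.zero_le _))
    · obtain ⟨y, hy, hyc⟩ :=
        exists_mem_card_filter_le_eq hpos (runIndex_le_card (P := P) x.succ)
      have hyx := le_of_card_filter_le_le_runIndex hy hyc.le
      have hxy := Fin.succ_le_succ_iff.mp (hx y.succ (Fin.ext (by
        simp only [partitionLabelling]
        rw [runIndex_succ_of_mem_bigMins hy, hyc])))
      exact hxM (le_antisymm hxy hyx ▸ hy)
  · intro hx u hu
    have hu' : runIndex P u = #{z ∈ bigMins P | z ≤ x} := by
      rw [← runIndex_succ_of_mem_bigMins hx]
      exact congrArg Fin.val hu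
    have hpos : 0 < #{z ∈ bigMins P | z ≤ x} := card_pos.mpr ⟨x, by simp [hx]⟩
    obtain ⟨y, rfl⟩ := Fin.exists_succ_eq.mpr (show u ≠ 0 by rintro rfl; simp at hu'; omega)
    exact Fin.succ_le_succ_iff.mpr (le_of_card_filter_le_le_runIndex hx hu'.ge)

lemma blockLabel_partitionLabelling (w : Fin n) :
    blockLabel (partitionLabelling P hk) w = if 1 < #(P.part w)
      then .inl #{z ∈ bigMins P | z < blockMin P w} else .inr (blockMin P w) := by
  by_cases hwM : w ∈ bigMins P
  · obtain ⟨hbig, hmin⟩ := mem_bigMins.mp hwM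
    rw [blockLabel_of_isFiberMin ((isFiberMin_partitionLabelling_succ_iff hk).mpr hwM), if_pos hbig,
      hmin]
    simp only [partitionLabelling, runIndex_succ_of_mem_bigMins hwM, ← card_filter_lt_add_one hwM,
      Nat.add_sub_cancel]
  have hw : ¬ IsFiberMin (partitionLabelling P hk) w.succ :=
    mt (isFiberMin_partitionLabelling_succ_iff hk).mp hwM
  rw [blockLabel, if_neg hw]
  by_cases hmin : blockMin P w = w
  · have hsmall : ¬ 1 < #(P.part w) := fun hbig => hwM (mem_bigMins.mpr ⟨hbig, hmin⟩)
    rw [if_neg hsmall, hmin, if_neg]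
    rintro ⟨u, hu, huw⟩
    simp only [partitionLabelling, runIndex_succ_of_eq hmin] at hu
    obtain ⟨y, rfl⟩ := Fin.exists_succ_eq.mpr (show u ≠ 0 by rintro rfl; simp at hu)
    have := (runIndex_succ_le y).trans
      (card_filter_le_mono (s := bigMins P) (Fin.succ_lt_succ_iff.mp huw).le)
    omega
  · have hbig := one_lt_card_part_of_blockMin_ne hmin
    have hμ := blockMin_mem_bigMins hbig
    have hμw : (partitionLabelling P hk (blockMin P w).succ : ℕ) =
        partitionLabelling P hk w.succ + 1 := by
      simp only [partitionLabelling, runIndex_succ_of_ne hmin, runIndex_succ_of_mem_bigMins hμ,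
        card_filter_lt_add_one hμ]
    rw [if_pos hbig, if_pos ⟨_, hμw, Fin.succ_lt_succ_iff.mpr
      (lt_of_le_of_ne (blockMin_le (self_mem_part w)) hmin)⟩]
    simp only [partitionLabelling, runIndex_succ_of_ne hmin]

lemma labellingPartition_partitionLabelling : labellingPartition (partitionLabelling P hk) = P := by
  refine Finpartition.eq_of_part_eq fun a => ?_
  ext b
  rw [mem_part_labellingPartition, P.mem_part_iff_part_eq_part (mem_univ b) (mem_univ a), eq_comm,
    ← blockMin_eq_blockMin_iff, blockLabel_partitionLabelling, blockLabel_partitionLabelling]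
  constructor
  · intro h
    split_ifs at h with ha hb hb
    · exact (card_filter_lt_inj (blockMin_mem_bigMins ha)
        (blockMin_mem_bigMins hb)).mp (Sum.inl.inj h)
    · exact Sum.inr.inj h
  · intro h
    rw [blockMin_eq_blockMin_iff.mp h, h]

end RoundTrip

def partitionEquivRunLabelling {n : ℕ} (hk : 1 ≤ k) :
    {P : Finpartition (univ : Finset (Fin n)) // #{b ∈ P.parts | 1 < #b} = k - 1} ≃
      {g : Fin (n + 1) → Fin k // IsRunLabelling g} where
  toFun P := ⟨partitionLabelling P.1 (by rw [card_bigMins, P.2]; omega),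
    isRunLabelling_partitionLabelling _⟩
  invFun g := ⟨labellingPartition g.1, by
    have := card_bigMins_labellingPartition g.2
    rw [← card_bigMins]
    omega⟩
  left_inv P :=
    Subtype.ext (labellingPartition_partitionLabelling (by rw [card_bigMins, P.2]; omega))
  right_inv g := Subtype.ext (funext fun v => Fin.ext (runIndex_labellingPartition g.2 v))

end FlattenedPartition

open FlattenedPartition in
theorem card_partitions_big_blocks_eq_f_general (n k : ℕ) (hk : 1 ≤ k) :
    Nat.card {P : Finpartition (Finset.univ : Finset (Fin n)) //
      (P.parts.filter fun b => 1 < b.card).card = k - 1} = f (n + 1) k := by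
  rw [f, ← Nat.card_eq_finsetCard]
  exact Nat.card_congr ((partitionEquivRunLabelling hk).trans flatSetEquivRunLabelling.symm)

/-- For all integers `n ≥ 1` and `k ≥ 1`, the number of set partitions of `[n]` having
exactly `k - 1` blocks of size greater than `1` equals `f_{n+1,k}`, the number of flattened
partitions over `[n+1]` having exactly `k` runs. -/
theorem card_partitions_big_blocks_eq_f (n k : ℕ) (hn : 1 ≤ n) (hk : 1 ≤ k) :
    Nat.card {P : Finpartition (Finset.univ : Finset (Fin n)) //
      (P.parts.filter fun b => 1 < b.card).card = k - 1} = f (n + 1) k :=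
  card_partitions_big_blocks_eq_f_general n k hk
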